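/- arXiv:2505.17000 — 2 statements merged into one kernel-verified Lean document; each statement's English description precedes it below -/
import Mathlib

section
/- Fix an integer d ≥ 2, an index 0 ≤ i ≤ d, and κ as below with κ'(1) < 1. Then, as L → ∞, M_i(L) converges to (2√π / Γ((d+1)/2)) · (η_1(1−κ'(1)))^{−d/2} · ∫_{ℝ^d} Π(λ)·𝟙_{O_i}(λ)·f_{(1+η_1(1−κ'(1)))/2}(λ) dλ. (Low-disorder regime of Theorem 3.2, stated via the Kac–Rice expression for the expected number of critical points of index i.) -/
open MeasureTheory Filter Real

/-- `K_d := 2^{d/2} ∏_{j=1}^d Γ(j/2)`. -/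
noncomputable def Kd (d : ℕ) : ℝ :=
  2 ^ ((d : ℝ) / 2) * ∏ j ∈ Finset.Icc 1 d, Real.Gamma ((j : ℝ) / 2)

/-- `Π(λ) := ∏_{j=1}^d |λ_j|`. -/
noncomputable def PiAbs (d : ℕ) (lam : Fin d → ℝ) : ℝ := ∏ j, |lam j|

/-- `Δ(λ) := ∏_{1 ≤ h < k ≤ d} |λ_h − λ_k|`. -/
noncomputable def DeltaV (d : ℕ) (lam : Fin d → ℝ) : ℝ :=
  ∏ h : Fin d, ∏ k : Fin d, if h < k then |lam h - lam k| else 1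

/-- The density of the ordered eigenvalues of a GOI(c) matrix. -/
noncomputable def fGOI (d : ℕ) (c : ℝ) (lam : Fin d → ℝ) : ℝ :=
  (Kd d * Real.sqrt (1 + d * c))⁻¹ * DeltaV d lam *
    Real.exp (-(∑ j, lam j ^ 2) / 2 + c * (∑ j, lam j) ^ 2 / (2 * (1 + d * c))) *
    Set.indicator {x : Fin d → ℝ | Monotone x} (fun _ => 1) lam

/-- `O_i := {λ : λ_i < 0 < λ_{i+1}}` with conventions `λ_0 = −∞`, `λ_{d+1} = +∞`
(one-based indexing; coordinates here are zero-based). -/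
def Oi (d i : ℕ) : Set (Fin d → ℝ) :=
  {lam | (∀ j : Fin d, (j : ℕ) + 1 = i → lam j < 0) ∧ (∀ j : Fin d, (j : ℕ) = i → 0 < lam j)}

/-- `∫_{ℝ^d} Π(λ)·𝟙_{O_i}(λ)·f_c(λ) dλ`. -/
noncomputable def GOIint (d i : ℕ) (c : ℝ) : ℝ :=
  ∫ lam : Fin d → ℝ,
    PiAbs d lam * Set.indicator (Oi d i) (fun _ => 1) lam * fGOI d c lam

/-- `η_L := κ_L'(1)/κ_L''(1)` where `κ_L` is the `L`-fold iterate of `κ`. -/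
noncomputable def etaL (κ : ℝ → ℝ) (L : ℕ) : ℝ :=
  deriv (κ^[L]) 1 / deriv (deriv (κ^[L])) 1

/-- The Kac–Rice expression for the expected number of critical points of index `i`
of the depth-`L` limiting field on `S^d`. -/
noncomputable def Mcrit (d i : ℕ) (κ : ℝ → ℝ) (L : ℕ) : ℝ :=
  2 * Real.sqrt π / Real.Gamma (((d : ℝ) + 1) / 2) * etaL κ L ^ (-(d : ℝ) / 2) *
    GOIint d i ((1 + etaL κ L) / 2)

/-!
With `a = κ'(1)` and `b = κ''(1)`, the chain rule at the fixed point `1` gives `κ_L'(1) = a^L` and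
`κ_L''(1) = b κ_{L-1}'(1)² + a κ_{L-1}''(1)`, whence `a (1 - a) κ_L''(1) = b a^L (1 - a^L)` and
`η_L = a (1 - a) / (b (1 - a^L)) → η_1 (1 - a)` when `a < 1`. It remains to see that `M_i` depends
continuously on `η > 0`, i.e. that `c ↦ ∫ Π 𝟙_{O_i} f_c` is continuous on `1 + d c > 0`: locally
in `c` the integrand is dominated by `∏ⱼ (1 + λⱼ²)^(2d+1) e^{-ε λⱼ²}` for some `ε > 0`, since
`|λ_h - λ_k| ≤ (1 + λ_h²)(1 + λ_k²)` and `(∑ λⱼ)² ≤ d ∑ λⱼ²`.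
-/

section IterateDeriv

variable {𝕜 : Type*} [NontriviallyNormedField 𝕜] {f : 𝕜 → 𝕜} {x : 𝕜}

theorem ContDiff.iterate {n : WithTop ℕ∞} (hf : ContDiff 𝕜 n f) (k : ℕ) :
    ContDiff 𝕜 n f^[k] := by
  induction k with
  | zero => exact contDiff_id
  | succ k ih => rw [Function.iterate_succ']; exact hf.comp ih

theorem deriv_iterate_of_isFixedPt (hf : DifferentiableAt 𝕜 f x) (hx : Function.IsFixedPt f x)
    (n : ℕ) :
    deriv f^[n] x = deriv f x ^ n :=
  (HasDerivAt.iterate x hf.hasDerivAt hx n).deriv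

theorem deriv_deriv_iterate_succ_of_isFixedPt (hf : ContDiff 𝕜 2 f) (hx : Function.IsFixedPt f x)
    (n : ℕ) :
    deriv (deriv f^[n + 1]) x =
      deriv (deriv f) x * (deriv f x ^ n) ^ 2 + deriv f x * deriv (deriv f^[n]) x := by
  have hf1 : Differentiable 𝕜 f := hf.differentiable two_ne_zero
  have hfn : ContDiff 𝕜 2 f^[n] := hf.iterate n
  have chain : deriv f^[n + 1] = fun y => deriv f (f^[n] y) * deriv f^[n] y := by
    funext y
    rw [Function.iterate_succ']
    exact deriv_comp y (hf1 _) (hfn.differentiable two_ne_zero y)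
  have hprod : HasDerivAt (fun y => deriv f (f^[n] y) * deriv f^[n] y) _ x :=
    ((hf.differentiable_deriv_two _).hasDerivAt.comp x
      (hfn.differentiable two_ne_zero x).hasDerivAt).mul (hfn.differentiable_deriv_two x).hasDerivAt
  rw [chain, hprod.deriv, Function.comp_apply, Function.iterate_fixed hx,
    deriv_iterate_of_isFixedPt (hf1 x) hx]
  ring

/-- Multiplied out, so that no condition on `deriv f x` is needed. -/
theorem deriv_deriv_iterate_of_isFixedPt (hf : ContDiff 𝕜 2 f) (hx : Function.IsFixedPt f x)
    (n : ℕ) :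
    deriv f x * (1 - deriv f x) * deriv (deriv f^[n]) x =
      deriv (deriv f) x * deriv f x ^ n * (1 - deriv f x ^ n) := by
  induction n with
  | zero => simp
  | succ n ih =>
    rw [deriv_deriv_iterate_succ_of_isFixedPt hf hx]
    linear_combination deriv f x * ih

end IterateDeriv

section Depth

variable {κ : ℝ → ℝ}

theorem etaL_eq (hκ : ContDiff ℝ 2 κ) (hfix : κ 1 = 1) (ha : 0 < deriv κ 1)
    (ha1 : deriv κ 1 < 1) (hb : deriv (deriv κ) 1 ≠ 0) {L : ℕ} (hL : L ≠ 0) :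
    etaL κ L = deriv κ 1 * (1 - deriv κ 1) / (deriv (deriv κ) 1 * (1 - deriv κ 1 ^ L)) := by
  have hclosed := deriv_deriv_iterate_of_isFixedPt hκ hfix L
  have hsub : 1 - deriv κ 1 ^ L ≠ 0 := (sub_pos.2 (pow_lt_one₀ ha.le ha1 hL)).ne'
  have hrhs : deriv (deriv κ) 1 * deriv κ 1 ^ L * (1 - deriv κ 1 ^ L) ≠ 0 := by
    have := pow_pos ha L
    positivity
  rw [etaL, deriv_iterate_of_isFixedPt (hκ.differentiable two_ne_zero 1) hfix,
    div_eq_div_iff (right_ne_zero_of_mul (hclosed ▸ hrhs)) (mul_ne_zero hb hsub)]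
  linear_combination -hclosed

theorem tendsto_etaL (hκ : ContDiff ℝ 2 κ) (hfix : κ 1 = 1) (ha : 0 < deriv κ 1)
    (ha1 : deriv κ 1 < 1) (hb : deriv (deriv κ) 1 ≠ 0) :
    Tendsto (etaL κ) atTop (nhds (deriv κ 1 / deriv (deriv κ) 1 * (1 - deriv κ 1))) := by
  have hpow := tendsto_pow_atTop_nhds_zero_of_lt_one ha.le ha1
  have hlim : Tendsto (fun L : ℕ => deriv κ 1 * (1 - deriv κ 1) /
      (deriv (deriv κ) 1 * (1 - deriv κ 1 ^ L))) atTop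
      (nhds (deriv κ 1 * (1 - deriv κ 1) / (deriv (deriv κ) 1 * (1 - 0)))) :=
    tendsto_const_nhds.div (tendsto_const_nhds.mul (tendsto_const_nhds.sub hpow)) (by simpa)
  rw [sub_zero, mul_one] at hlim
  rw [div_mul_eq_mul_div]
  exact hlim.congr' <| (eventually_ne_atTop 0).mono fun L hL =>
    (etaL_eq hκ hfix ha ha1 hb hL).symm

end Depth

theorem Kd_pos (d : ℕ) : 0 < Kd d :=
  mul_pos (rpow_pos_of_pos two_pos _) <| Finset.prod_pos fun j hj =>
    Real.Gamma_pos_of_pos (by have := (Finset.mem_Icc.mp hj).1; positivity)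

theorem DeltaV_nonneg (d : ℕ) (lam : Fin d → ℝ) : 0 ≤ DeltaV d lam :=
  Finset.prod_nonneg fun _ _ => Finset.prod_nonneg fun _ _ => by split_ifs <;> positivity

theorem fGOI_nonneg (d : ℕ) (c : ℝ) (lam : Fin d → ℝ) : 0 ≤ fGOI d c lam := by
  have := Kd_pos d
  unfold fGOI
  exact mul_nonneg (mul_nonneg (mul_nonneg (by positivity) (DeltaV_nonneg d lam)) (exp_pos _).le)
    (Set.indicator_nonneg (fun _ _ => zero_le_one) _)

theorem continuous_PiAbs (d : ℕ) : Continuous (PiAbs d) :=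
  continuous_finsetProd _ fun j _ => (continuous_apply j).abs

theorem isOpen_Oi (d i : ℕ) : IsOpen (Oi d i) := by
  simp only [Oi, Set.ofPred_and, Set.ofPred_forall]
  refine .inter (isOpen_iInter_of_finite fun j => ?_) (isOpen_iInter_of_finite fun j => ?_)
  · by_cases h : (j : ℕ) + 1 = i
    · simpa [h] using isOpen_lt (continuous_apply j) continuous_const
    · simp [h]
  · by_cases h : (j : ℕ) = i
    · simpa [h] using isOpen_lt continuous_const (continuous_apply j)
    · simp [h]

theorem measurable_fGOI (d : ℕ) (c : ℝ) : Measurable (fGOI d c) := by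
  have hΔ : Continuous (DeltaV d) :=
    continuous_finsetProd _ fun h _ => continuous_finsetProd _ fun k _ => by
      split_ifs <;> fun_prop
  unfold fGOI
  exact ((measurable_const.mul hΔ.measurable).mul (by fun_prop)).mul
    (measurable_const.indicator isClosed_monotone.measurableSet)

theorem continuousAt_fGOI (d : ℕ) {c₀ : ℝ} (hc₀ : 0 < 1 + d * c₀) (lam : Fin d → ℝ) :
    ContinuousAt (fun c => fGOI d c lam) c₀ := by
  have := Kd_pos d
  unfold fGOI
  fun_prop (disch := positivity)

theorem abs_le_one_add_sq (t : ℝ) : |t| ≤ 1 + t ^ 2 := by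
  nlinarith [sq_nonneg (|t| - 1), sq_abs t]

theorem abs_sub_le_one_add_sq_mul (s t : ℝ) : |s - t| ≤ (1 + s ^ 2) * (1 + t ^ 2) := by
  nlinarith [abs_sub s t, sq_nonneg (|s| - 1 / 2), sq_nonneg (|t| - 1 / 2), sq_abs s, sq_abs t,
    mul_nonneg (sq_nonneg s) (sq_nonneg t)]

theorem PiAbs_le (d : ℕ) (lam : Fin d → ℝ) : PiAbs d lam ≤ ∏ j, (1 + lam j ^ 2) :=
  Finset.prod_le_prod (fun _ _ => abs_nonneg _) fun j _ => abs_le_one_add_sq (lam j)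

theorem DeltaV_le (d : ℕ) (lam : Fin d → ℝ) : DeltaV d lam ≤ ∏ j, (1 + lam j ^ 2) ^ (2 * d) := by
  have hfactor (h k : Fin d) : 0 ≤ (if h < k then |lam h - lam k| else 1 : ℝ) := by
    split_ifs <;> positivity
  calc DeltaV d lam ≤ ∏ h : Fin d, ∏ k : Fin d, (1 + lam h ^ 2) * (1 + lam k ^ 2) := by
        refine Finset.prod_le_prod (fun h _ => Finset.prod_nonneg fun k _ => hfactor h k)
          fun h _ => Finset.prod_le_prod (fun k _ => hfactor h k) fun k _ => ?_
        split_ifs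
        · exact abs_sub_le_one_add_sq_mul _ _
        · exact one_le_mul_of_one_le_of_one_le (le_add_of_nonneg_right (sq_nonneg _))
            (le_add_of_nonneg_right (sq_nonneg _))
    _ = ∏ j, (1 + lam j ^ 2) ^ (2 * d) := by
        simp only [Finset.prod_mul_distrib, Finset.prod_const, Finset.card_univ, Fintype.card_fin,
          ← Finset.prod_pow]
        rw [← Finset.prod_mul_distrib]
        exact Finset.prod_congr rfl fun _ _ => by ring

/-- The exponent of `f_c`, with `Q = ∑ λⱼ²` and `S = ∑ λⱼ`; it grows with `c` because
`c / (1 + n c)` does. -/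
theorem neg_div_two_add_div_le {n c C Q S : ℝ} (hn : 0 ≤ n) (hc : 0 < 1 + n * c) (hcC : c ≤ C)
    (hC : 0 ≤ C) (hSQ : S ^ 2 ≤ n * Q) :
    -Q / 2 + c * S ^ 2 / (2 * (1 + n * c)) ≤ -Q / (2 * (1 + n * C)) := by
  have hmono : c * S ^ 2 / (2 * (1 + n * c)) ≤ C * S ^ 2 / (2 * (1 + n * C)) := by
    rw [div_le_div_iff₀ (by positivity) (by positivity)]
    nlinarith [mul_nonneg (mul_nonneg hn (sq_nonneg S)) (sub_nonneg.2 hcC)]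
  have hCS : C * S ^ 2 / (2 * (1 + n * C)) ≤ C * (n * Q) / (2 * (1 + n * C)) := by gcongr
  have hid : -Q / 2 + C * (n * Q) / (2 * (1 + n * C)) = -Q / (2 * (1 + n * C)) := by
    field_simp
    ring
  linarith

theorem fGOI_le (d : ℕ) {c C s : ℝ} (hs : 0 < s) (hsc : s ≤ 1 + d * c) (hcC : c ≤ C)
    (hC : 0 ≤ C) (lam : Fin d → ℝ) :
    fGOI d c lam ≤ (Kd d * √s)⁻¹ *
      ∏ j, (1 + lam j ^ 2) ^ (2 * d) * exp (-(2 * (1 + d * C))⁻¹ * lam j ^ 2) := by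
  have hK := Kd_pos d
  have hexp : exp (-(∑ j, lam j ^ 2) / 2 + c * (∑ j, lam j) ^ 2 / (2 * (1 + d * c))) ≤
      ∏ j, exp (-(2 * (1 + d * C))⁻¹ * lam j ^ 2) := by
    have hCS : (∑ j, lam j) ^ 2 ≤ d * ∑ j, lam j ^ 2 := by
      simpa using sq_sum_le_card_mul_sum_sq (s := Finset.univ) (f := lam)
    rw [← exp_sum, exp_le_exp, ← Finset.mul_sum]
    calc _ ≤ -(∑ j, lam j ^ 2) / (2 * (1 + d * C)) :=
          neg_div_two_add_div_le d.cast_nonneg (hs.trans_le hsc) hcC hC hCS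
      _ = _ := by ring
  have hind : {x : Fin d → ℝ | Monotone x}.indicator (fun _ => (1 : ℝ)) lam ≤ 1 :=
    Set.indicator_apply_le' (fun _ => le_rfl) fun _ => zero_le_one
  calc fGOI d c lam ≤ (Kd d * √(1 + d * c))⁻¹ * DeltaV d lam *
        exp (-(∑ j, lam j ^ 2) / 2 + c * (∑ j, lam j) ^ 2 / (2 * (1 + d * c))) * 1 := by
        unfold fGOI
        have := DeltaV_nonneg d lam
        gcongr
    _ ≤ (Kd d * √s)⁻¹ * (∏ j, (1 + lam j ^ 2) ^ (2 * d)) *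
        ∏ j, exp (-(2 * (1 + d * C))⁻¹ * lam j ^ 2) := by
        rw [mul_one]
        gcongr
        · exact DeltaV_nonneg d lam
        · exact DeltaV_le d lam
    _ = _ := by rw [Finset.prod_mul_distrib, mul_assoc]

theorem norm_PiAbs_mul_indicator_mul_fGOI_le (d i : ℕ) {c C s : ℝ} (hs : 0 < s)
    (hsc : s ≤ 1 + d * c) (hcC : c ≤ C) (hC : 0 ≤ C) (lam : Fin d → ℝ) :
    ‖PiAbs d lam * (Oi d i).indicator (fun _ => 1) lam * fGOI d c lam‖ ≤ (Kd d * √s)⁻¹ *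
      ∏ j, (1 + lam j ^ 2) ^ (2 * d + 1) * exp (-(2 * (1 + d * C))⁻¹ * lam j ^ 2) := by
  have hPi : 0 ≤ PiAbs d lam := Finset.prod_nonneg fun _ _ => abs_nonneg _
  have hind₀ : 0 ≤ (Oi d i).indicator (fun _ => (1 : ℝ)) lam :=
    Set.indicator_nonneg (fun _ _ => zero_le_one) lam
  have hind₁ : (Oi d i).indicator (fun _ => (1 : ℝ)) lam ≤ 1 :=
    Set.indicator_apply_le' (fun _ => le_rfl) fun _ => zero_le_one
  have hf := fGOI_nonneg d c lam
  rw [Real.norm_of_nonneg (by positivity)]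
  calc _ ≤ (∏ j, (1 + lam j ^ 2)) * 1 * ((Kd d * √s)⁻¹ *
        ∏ j, (1 + lam j ^ 2) ^ (2 * d) * exp (-(2 * (1 + d * C))⁻¹ * lam j ^ 2)) := by
        gcongr
        · exact PiAbs_le d lam
        · exact fGOI_le d hs hsc hcC hC lam
    _ = _ := by
        rw [mul_one, mul_left_comm, ← Finset.prod_mul_distrib]
        exact congrArg _ (Finset.prod_congr rfl fun _ _ => by ring)

theorem integrable_one_add_sq_pow_mul_exp_neg_mul_sq (m : ℕ) {b : ℝ} (hb : 0 < b) :
    Integrable fun t : ℝ => (1 + t ^ 2) ^ m * exp (-b * t ^ 2) := by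
  have hexpand (t : ℝ) : (1 + t ^ 2) ^ m * exp (-b * t ^ 2) =
      ∑ k ∈ Finset.range (m + 1),
        (m.choose k : ℝ) * (t ^ ((2 * k : ℕ) : ℝ) * exp (-b * t ^ 2)) := by
    rw [add_comm, add_pow, Finset.sum_mul]
    refine Finset.sum_congr rfl fun k _ => ?_
    rw [rpow_natCast]
    ring
  simp_rw [hexpand]
  exact integrable_finsetSum _ fun k _ => (integrable_rpow_mul_exp_neg_mul_sq hb
    (neg_one_lt_zero.trans_le (Nat.cast_nonneg _))).const_mul _

theorem continuousAt_GOIint (d i : ℕ) {c₀ : ℝ} (hc₀ : 0 < 1 + d * c₀) :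
    ContinuousAt (GOIint d i) c₀ := by
  set C := |c₀| + 1
  set s := (1 + d * c₀) / 2
  have hnear : ∀ᶠ c in nhds c₀, s ≤ 1 + d * c ∧ c ≤ C := by
    filter_upwards [(continuous_const.add (continuous_const.mul continuous_id)).continuousAt
      |>.eventually (lt_mem_nhds (half_lt_self hc₀)),
      eventually_le_nhds ((le_abs_self c₀).trans_lt (lt_add_one _))] with c h₁ h₂
    exact ⟨h₁.le, h₂⟩
  refine continuousAt_of_dominated (bound := fun lam => (Kd d * √s)⁻¹ *
      ∏ j, (1 + lam j ^ 2) ^ (2 * d + 1) * exp (-(2 * (1 + d * C))⁻¹ * lam j ^ 2)) ?_ ?_ ?_ ?_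
  · exact .of_forall fun c => Measurable.aestronglyMeasurable <|
      ((continuous_PiAbs d).measurable.mul
        (measurable_const.indicator (isOpen_Oi d i).measurableSet)).mul (measurable_fGOI d c)
  · filter_upwards [hnear] with c ⟨hsc, hcC⟩
    exact .of_forall <| norm_PiAbs_mul_indicator_mul_fGOI_le d i (half_pos hc₀) hsc hcC
      (by positivity)
  · exact (Integrable.fintype_prod fun _ =>
      integrable_one_add_sq_pow_mul_exp_neg_mul_sq _ (by positivity)).const_mul _
  · exact .of_forall fun lam => continuousAt_const.mul (continuousAt_fGOI d hc₀ lam)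

theorem statement0_general (d i : ℕ) (κ : ℝ → ℝ)
    (hsmooth : ContDiff ℝ 2 κ) (hfix : κ 1 = 1)
    (hpos1 : 0 < deriv κ 1) (hpos2 : 0 < deriv (deriv κ) 1)
    (hlow : deriv κ 1 < 1) :
    Tendsto (fun L : ℕ => Mcrit d i κ L) atTop
      (nhds (2 * Real.sqrt π / Real.Gamma (((d : ℝ) + 1) / 2) *
        (deriv κ 1 / deriv (deriv κ) 1 * (1 - deriv κ 1)) ^ (-(d : ℝ) / 2) *
        GOIint d i ((1 + deriv κ 1 / deriv (deriv κ) 1 * (1 - deriv κ 1)) / 2))) := by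
  set η := deriv κ 1 / deriv (deriv κ) 1 * (1 - deriv κ 1)
  have hη : 0 < η := mul_pos (div_pos hpos1 hpos2) (sub_pos.2 hlow)
  have hcont : ContinuousAt (fun e : ℝ => 2 * √π / Gamma ((d + 1) / 2) * e ^ (-(d : ℝ) / 2) *
      GOIint d i ((1 + e) / 2)) η :=
    (continuousAt_const.mul (continuousAt_rpow_const _ _ (.inl hη.ne'))).mul
      ((continuousAt_GOIint d i (by positivity)).comp (by fun_prop))
  exact hcont.tendsto.comp (tendsto_etaL hsmooth hfix hpos1 hlow hpos2.ne')

/-- Low-disorder regime of Theorem 3.2: if `κ'(1) < 1` then `M_i(L)` converges. -/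
theorem statement0 (d i : ℕ) (hd : 2 ≤ d) (hi : i ≤ d) (κ : ℝ → ℝ)
    (hsmooth : ContDiff ℝ 2 κ) (hfix : κ 1 = 1)
    (hpos1 : 0 < deriv κ 1) (hpos2 : 0 < deriv (deriv κ) 1)
    (hlow : deriv κ 1 < 1) :
    Tendsto (fun L : ℕ => Mcrit d i κ L) atTop
      (nhds (2 * Real.sqrt π / Real.Gamma (((d : ℝ) + 1) / 2) *
        (deriv κ 1 / deriv (deriv κ) 1 * (1 - deriv κ 1)) ^ (-(d : ℝ) / 2) *
        GOIint d i ((1 + deriv κ 1 / deriv (deriv κ) 1 * (1 - deriv κ 1)) / 2))) :=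
  statement0_general d i κ hsmooth hfix hpos1 hpos2 hlow
end

section
/- Let κ : ℝ → ℝ be twice continuously differentiable with κ(1) = 1, κ'(1) > 0 and κ''(1) > 0, and for L ≥ 1 let κ_L denote the L-fold iterate κ∘⋯∘κ. Then κ_L''(1) > 0 for every L ≥ 1, and the quantity γ_L := (κ_L'(1)² − κ_L'(1))/κ_L''(1) does not depend on L: for every L ≥ 1, γ_L = (κ'(1)² − κ'(1))/κ''(1). (Invariance of the spectral parameter γ_L used to verify the hypothesis of the Kac–Rice Theorem 4.4 of Cheng–Schwartzman.) -/
/-!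
Write `d_L = κ_L'(1)` and `s_L = κ_L''(1)`. At the fixed point the chain rule gives
`d_{L+1} = κ'(1) d_L` and `s_{L+1} = κ''(1) d_L² + κ'(1) s_L`, so `s_L > 0` for `L ≥ 1`, and
both sides of `κ''(1) (d_L² - d_L) = (κ'(1)² - κ'(1)) s_L` satisfy the same linear recursion
`u_{L+1} = (κ'(1)² - κ'(1)) κ''(1) d_L² + κ'(1) u_L` with `u_0 = 0`.
-/

section Composition

variable {𝕜 : Type*} [NontriviallyNormedField 𝕜] {f g : 𝕜 → 𝕜}

theorem deriv_comp_eq_mul (hf : Differentiable 𝕜 f) (hg : Differentiable 𝕜 g) :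
    deriv (f ∘ g) = fun x => deriv f (g x) * deriv g x :=
  funext fun x => deriv_comp x (hf _) (hg _)

theorem differentiable_deriv_comp (hf : Differentiable 𝕜 f) (hf' : Differentiable 𝕜 (deriv f))
    (hg : Differentiable 𝕜 g) (hg' : Differentiable 𝕜 (deriv g)) :
    Differentiable 𝕜 (deriv (f ∘ g)) := by
  rw [deriv_comp_eq_mul hf hg]
  exact (hf'.comp hg).mul hg'

theorem deriv_deriv_comp (hf : Differentiable 𝕜 f) (hf' : Differentiable 𝕜 (deriv f))
    (hg : Differentiable 𝕜 g) (hg' : Differentiable 𝕜 (deriv g)) (x : 𝕜) :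
    deriv (deriv (f ∘ g)) x =
      deriv (deriv f) (g x) * deriv g x ^ 2 + deriv f (g x) * deriv (deriv g) x := by
  rw [deriv_comp_eq_mul hf hg,
    deriv_fun_mul (c := fun y => deriv f (g y)) ((hf' _).comp x (hg _)) (hg' _),
    ← Function.comp_def, deriv_comp x (hf' _) (hg _)]
  ring

end Composition

section Iterate

variable {𝕜 : Type*} [NontriviallyNormedField 𝕜] {κ : 𝕜 → 𝕜}
  (hκ : Differentiable 𝕜 κ) (hκ' : Differentiable 𝕜 (deriv κ))
include hκ hκ'

theorem differentiable_deriv_iterate (n : ℕ) : Differentiable 𝕜 (deriv κ^[n]) := by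
  induction n with
  | zero => simp
  | succ n ih =>
    rw [Function.iterate_succ']
    exact differentiable_deriv_comp hκ hκ' (hκ.iterate n) ih

variable {x : 𝕜} (hx : κ x = x)
include hx

omit hκ' in
theorem deriv_iterate_of_fixed (n : ℕ) : deriv κ^[n] x = deriv κ x ^ n :=
  (HasDerivAt.iterate x (hκ x).hasDerivAt hx n).deriv

theorem deriv_deriv_iterate_succ_of_fixed (n : ℕ) :
    deriv (deriv κ^[n + 1]) x =
      deriv (deriv κ) x * deriv κ x ^ (2 * n) + deriv κ x * deriv (deriv κ^[n]) x := by
  rw [Function.iterate_succ',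
    deriv_deriv_comp hκ hκ' (hκ.iterate n) (differentiable_deriv_iterate hκ hκ' n),
    Function.iterate_fixed hx, deriv_iterate_of_fixed hκ hx, ← pow_mul, mul_comm n]

theorem deriv_deriv_mul_sq_sub_deriv_iterate_of_fixed (n : ℕ) :
    deriv (deriv κ) x * (deriv κ^[n] x ^ 2 - deriv κ^[n] x) =
      (deriv κ x ^ 2 - deriv κ x) * deriv (deriv κ^[n]) x := by
  induction n with
  | zero => simp
  | succ n ih =>
    rw [deriv_deriv_iterate_succ_of_fixed hκ hκ' hx, deriv_iterate_of_fixed hκ hx] at *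
    linear_combination deriv κ x * ih

end Iterate

theorem deriv_deriv_iterate_pos_of_fixed {κ : ℝ → ℝ} (hκ : Differentiable ℝ κ)
    (hκ' : Differentiable ℝ (deriv κ)) {x : ℝ} (hx : κ x = x) (h1 : 0 < deriv κ x)
    (h2 : 0 < deriv (deriv κ) x) {n : ℕ} (hn : 1 ≤ n) : 0 < deriv (deriv κ^[n]) x := by
  induction n, hn using Nat.le_induction with
  | base => simpa using h2
  | succ n _ ih =>
    rw [deriv_deriv_iterate_succ_of_fixed hκ hκ' hx]
    positivity

/-- Invariance of the spectral parameter `γ_L := (κ_L'(1)² − κ_L'(1))/κ_L''(1)`: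
`κ_L''(1) > 0` for every `L ≥ 1` and `γ_L = (κ'(1)² − κ'(1))/κ''(1)` for every `L ≥ 1`. -/
theorem statement13 (κ : ℝ → ℝ) (hκ : ContDiff ℝ 2 κ) (hfix : κ 1 = 1)
    (h1 : 0 < deriv κ 1) (h2 : 0 < deriv (deriv κ) 1) :
    ∀ L : ℕ, 1 ≤ L →
      0 < deriv (deriv (κ^[L])) 1 ∧
      (deriv (κ^[L]) 1 ^ 2 - deriv (κ^[L]) 1) / deriv (deriv (κ^[L])) 1 =
        (deriv κ 1 ^ 2 - deriv κ 1) / deriv (deriv κ) 1 := by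
  have hd : Differentiable ℝ κ := hκ.differentiable two_ne_zero
  have hd' : Differentiable ℝ (deriv κ) := (hκ.deriv' (n := 1)).differentiable one_ne_zero
  intro L hL
  have hpos := deriv_deriv_iterate_pos_of_fixed hd hd' hfix h1 h2 hL
  refine ⟨hpos, ?_⟩
  rw [div_eq_div_iff hpos.ne' h2.ne', mul_comm]
  exact deriv_deriv_mul_sq_sub_deriv_iterate_of_fixed hd hd' hfix L
end
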